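/- arXiv:2209.14524 — 2 statements merged into one kernel-verified Lean document; each statement's English description precedes it below -/
import Mathlib

section
/- Let s and t be positive integers, let M be a matroid with the (s,2s,t,2t)-property, and let (S_1,…,S_n) be an s-echidna of M with n ≥ max{s+2t,2s+t}−1. If I is a (t−1)-element subset of {1,…,n} and z ∈ E(M) − ⋃_{i∈I} S_i, then there is a 2t-element cocircuit of M containing {z} ∪ ⋃_{i∈I} S_i. -/
open Set Function

namespace Matroid

variable {α : Type*}

/-- A circuit of a matroid: a minimal dependent set. -/
def IsCircuit' (M : Matroid α) (C : Set α) : Prop := Minimal M.Dep C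

/-- A cocircuit of a matroid: a circuit of the dual matroid. -/
def IsCocircuit' (M : Matroid α) (C : Set α) : Prop := M✶.IsCircuit' C

/-- The `ℕ`-valued rank of a set `X` in a matroid `M`:
the size of a largest independent subset of `X`. -/
noncomputable def rk' (M : Matroid α) (X : Set α) : ℕ :=
  sSup {n : ℕ | ∃ I, M.Indep I ∧ I ⊆ X ∧ I.ncard = n}

/-- The connectivity function `λ(X) = r(X) + r(E − X) − r(M)`. -/
noncomputable def lam' (M : Matroid α) (X : Set α) : ℕ :=
  M.rk' X + M.rk' (M.E \ X) - M.rk' M.E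

/-- The `(s,u,t,v)`-property: every `s`-element subset of the ground set is contained in a
circuit of size `u`, and every `t`-element subset is contained in a cocircuit of size `v`. -/
def HasProp (M : Matroid α) (s u t v : ℕ) : Prop :=
  (∀ S ⊆ M.E, S.ncard = s → ∃ C, M.IsCircuit' C ∧ C.ncard = u ∧ S ⊆ C) ∧
  (∀ T ⊆ M.E, T.ncard = t → ∃ C, M.IsCocircuit' C ∧ C.ncard = v ∧ T ⊆ C)

/-- A `t`-echidna of order `n`: a family of `n` pairwise disjoint `2`-element subsets of the
ground set (spines) such that the union of any `t` spines is a circuit.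
(A `t`-coechidna of `M` is a `t`-echidna of `M✶`.) -/
def IsEchidna (M : Matroid α) (t : ℕ) {n : ℕ} (S : Fin n → Set α) : Prop :=
  (∀ i, S i ⊆ M.E) ∧ (∀ i, (S i).ncard = 2) ∧
  Pairwise (Function.onFun Disjoint S) ∧
  ∀ I : Finset (Fin n), I.card = t → M.IsCircuit' (⋃ i ∈ I, S i)

/-- `M` is an `(s,t)`-spike with associated partition `(A 1, …, A m)`: the `A i` are `m`
pairwise disjoint pairs partitioning the ground set, with `m ≥ max s t`, such that the union of
any `s` pairs is a circuit and the union of any `t` pairs is a cocircuit. -/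
def IsSpike (M : Matroid α) (s t : ℕ) {m : ℕ} (A : Fin m → Set α) : Prop :=
  max s t ≤ m ∧ (⋃ i, A i) = M.E ∧
  Pairwise (Function.onFun Disjoint A) ∧ (∀ i, (A i).ncard = 2) ∧
  (∀ I : Finset (Fin m), I.card = s → M.IsCircuit' (⋃ i ∈ I, A i)) ∧
  (∀ I : Finset (Fin m), I.card = t → M.IsCocircuit' (⋃ i ∈ I, A i))

end Matroid

universe u

open Matroid

/-!
Pick one element of each spine `S i`, `i ∈ I`; together with `z` these form a `t`-set, which lies
in a `2t`-element cocircuit `C`. The cocircuit meets at most `2t` spines, so at least `s - 1`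
spines avoid it. Any such `s - 1` spines together with `S i` form a circuit meeting `C` only inside
`S i`; as a circuit never meets a cocircuit in exactly one element, `S i ⊆ C`.
-/

namespace Matroid

variable {α : Type*} {M : Matroid α} {C K : Set α}

lemma IsCircuit'.isCircuit (hC : M.IsCircuit' C) : M.IsCircuit C := hC

lemma IsCocircuit'.isCocircuit (hK : M.IsCocircuit' K) : M.IsCocircuit K := hK

lemma exists_injective_forall_mem {ι : Type*} {S : ι → Set α} (hS : Pairwise (Disjoint on S))
    (hne : ∀ i, (S i).Nonempty) : ∃ f : ι → α, Injective f ∧ ∀ i, f i ∈ S i := by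
  choose f hf using hne
  exact ⟨f, fun i j hij => by_contra fun hne => (hS hne).ne_of_mem (hf i) (hf j) hij, hf⟩

open Classical in
lemma card_filter_inter_nonempty_le_ncard {ι : Type*} [Fintype ι] {S : ι → Set α}
    (hS : Pairwise (Disjoint on S)) (hK : K.Finite) :
    (Finset.univ.filter fun j => (S j ∩ K).Nonempty).card ≤ K.ncard := by
  rw [← Fintype.card_subtype, ← Nat.card_eq_fintype_card, ← Nat.card_coe_set_eq]
  have := hK.to_subtype
  refine Nat.card_le_card_of_injective (fun j => ⟨j.2.some, j.2.some_mem.2⟩) fun i j hij => ?_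
  exact Subtype.ext <| by_contra fun hne =>
    (hS hne).ne_of_mem i.2.some_mem.1 j.2.some_mem.1 (congrArg Subtype.val hij)

namespace IsEchidna

variable {s n : ℕ} {S : Fin n → Set α}

lemma pos (hS : M.IsEchidna s S) : 0 < s := by
  refine Nat.pos_of_ne_zero fun hs => M.empty_not_isCircuit ?_
  simpa using (hS.2.2.2 ∅ (by simp [hs])).isCircuit

lemma subset_of_inter_nonempty (hS : M.IsEchidna s S) (hK : M.IsCocircuit' K) (hKfin : K.Finite)
    (hn : s + K.ncard ≤ n + 1) {i : Fin n} (hi : (S i ∩ K).Nonempty) : S i ⊆ K := by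
  classical
  have hs := hS.pos
  obtain ⟨-, hS2, hdisj, hcirc⟩ := hS
  set J := Finset.univ.filter fun j => (S j ∩ K).Nonempty with hJ
  have hJcard : J.card ≤ K.ncard := card_filter_inter_nonempty_le_ncard hdisj hKfin
  have hJc : s - 1 ≤ Jᶜ.card := by
    rw [Finset.card_compl, Fintype.card_fin]
    omega
  obtain ⟨L, hLJ, hLcard⟩ := Finset.exists_subset_card_eq hJc
  have hiL : i ∉ L := fun h => Finset.mem_compl.1 (hLJ h) (by simpa [hJ] using hi)
  have hC := hcirc (insert i L) (by rw [Finset.card_insert_of_notMem hiL]; omega)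
  have hCK : (⋃ j ∈ insert i L, S j) ∩ K = S i ∩ K := by
    refine subset_antisymm ?_ (inter_subset_inter_left _ (subset_biUnion_of_mem (by simp)))
    rintro x ⟨hx, hxK⟩
    obtain ⟨j, hj, hxj⟩ := mem_iUnion₂.1 hx
    obtain rfl | hjL := Finset.mem_insert.1 hj
    · exact ⟨hxj, hxK⟩
    · have hjK : ¬(S j ∩ K).Nonempty := by simpa [hJ] using Finset.mem_compl.1 (hLJ hjL)
      exact (hjK ⟨x, hxj, hxK⟩).elim
  have hnt : (S i ∩ K).Nontrivial := by
    simpa only [hCK] using hC.isCircuit.isCocircuit_inter_nontrivial hK.isCocircuit (hCK ▸ hi)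
  have hSi : S i ∩ K = S i := by
    refine eq_of_subset_of_ncard_le inter_subset_left ?_ (finite_of_ncard_ne_zero (by simp [hS2]))
    rw [hS2]
    exact one_lt_ncard_iff_nontrivial_and_finite.2 ⟨hnt, hKfin.subset inter_subset_right⟩
  exact hSi ▸ inter_subset_right

end IsEchidna

end Matroid

theorem statement3_general {α : Type u} (s t n : ℕ) (ht : 0 < t)
    (M : Matroid α) (hM : M.HasProp s (2 * s) t (2 * t))
    (S : Fin n → Set α) (hS : M.IsEchidna s S)
    (hn : max (s + 2 * t) (2 * s + t) - 1 ≤ n)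
    (I : Finset (Fin n)) (hI : I.card = t - 1)
    (z : α) (hz : z ∈ M.E \ ⋃ i ∈ I, S i) :
    ∃ C, M.IsCocircuit' C ∧ C.ncard = 2 * t ∧ insert z (⋃ i ∈ I, S i) ⊆ C := by
  obtain ⟨hSE, hS2, hdisj, -⟩ := id hS
  obtain ⟨f, hf_inj, hf⟩ := exists_injective_forall_mem hdisj
    fun i => nonempty_of_ncard_ne_zero (by simp [hS2 i])
  have hzf : z ∉ f '' I := by
    rintro ⟨i, hi, rfl⟩
    exact hz.2 (mem_biUnion hi (hf i))
  have hT : (insert z (f '' I)).ncard = t := by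
    rw [ncard_insert_of_notMem hzf, ncard_image_of_injective _ hf_inj, ncard_coe_finset, hI]
    omega
  have hTE : insert z (f '' I) ⊆ M.E :=
    insert_subset hz.1 (image_subset_iff.2 fun i _ => hSE i (hf i))
  obtain ⟨C, hC, hCcard, hTC⟩ := hM.2 _ hTE hT
  have hCfin : C.Finite := finite_of_ncard_pos (by omega)
  have hspine : ∀ i ∈ I, S i ⊆ C := fun i hi =>
    hS.subset_of_inter_nonempty hC hCfin (by omega)
      ⟨f i, hf i, hTC (mem_insert_of_mem _ ⟨i, hi, rfl⟩)⟩
  exact ⟨C, hC, hCcard, insert_subset (hTC (mem_insert _ _)) (iUnion₂_subset hspine)⟩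

/-- If `M` has the `(s,2s,t,2t)`-property and an `s`-echidna of order
`n ≥ max (s+2t) (2s+t) − 1`, then for any `(t−1)`-element set `I ⊆ [n]` and any
`z ∈ E(M) − ⋃_{i ∈ I} S i`, there is a `2t`-element cocircuit containing
`{z} ∪ ⋃_{i ∈ I} S i`. -/
theorem statement3 {α : Type u} (s t n : ℕ) (hs : 0 < s) (ht : 0 < t)
    (M : Matroid α) (hE : M.E.Finite) (hM : M.HasProp s (2 * s) t (2 * t))
    (S : Fin n → Set α) (hS : M.IsEchidna s S)
    (hn : max (s + 2 * t) (2 * s + t) - 1 ≤ n)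
    (I : Finset (Fin n)) (hI : I.card = t - 1)
    (z : α) (hz : z ∈ M.E \ ⋃ i ∈ I, S i) :
    ∃ C, M.IsCocircuit' C ∧ C.ncard = 2 * t ∧ insert z (⋃ i ∈ I, S i) ⊆ C :=
  statement3_general s t n ht M hM S hS hn I hI z hz
end

section
/- Let s and t be positive integers, let (A_1,…,A_m) be the associated partition of an (s,t)-spike M, and for J ⊆ [m] let A_J = ⋃_{j∈J} A_j. Then r(A_J) = 2|J| if |J| < s; r(A_J) = s + |J| − 1 if s ≤ |J| ≤ m − t + 1; and r(A_J) = m + s − t if |J| ≥ m − t + 1. -/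
open Set Function

/-!
An independent subset of `A_J` contains fewer than `s` whole arms, since `s` whole arms form a
circuit; so it has at most `|J| + s - 1` elements, and if `|J| < s` then `A_J` is itself a proper
subset of a circuit. Conversely, if `|J| ≤ m - t + 1`, each arm `A_j` with `j ∈ J` lies in a
cocircuit made of `A_j` and `t - 1` arms outside `J`; by orthogonality no circuit inside `A_J`
meets `A_j` in a single element, so `s - 1` whole arms of `J` together with one element of each
other arm of `J` form an independent set. If `|J| ≥ m - t + 1` the complement of `A_J` is a union
of fewer than `t` arms, hence coindependent, so `A_J` is spanning. Finally a circuit of size `2s`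
and a cocircuit of size `2t` against `r(M) + r*(M) = 2m` give `s + t ≤ m + 1`, which makes the
three ranges fit together.
-/

namespace Matroid

variable {α : Type*} {M : Matroid α} {I B C X : Set α}

lemma rk'_le_of_forall_indep {n : ℕ} (h : ∀ I, M.Indep I → I ⊆ X → I.ncard ≤ n) :
    M.rk' X ≤ n :=
  csSup_le ⟨0, ∅, M.empty_indep, empty_subset X, ncard_empty α⟩
    (by rintro _ ⟨I, hI, hIX, rfl⟩; exact h I hI hIX)

section Finite

variable [M.Finite]

lemma Indep.ncard_le_ncard_of_isBase (hI : M.Indep I) (hB : M.IsBase B) :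
    I.ncard ≤ B.ncard := by
  obtain ⟨B', hB', hIB'⟩ := hI.exists_isBase_superset
  rw [hB.ncard_eq_ncard_of_isBase hB']
  exact ncard_le_ncard hIB' hB'.finite

lemma Indep.ncard_le_rk' (hI : M.Indep I) (hIX : I ⊆ X) : I.ncard ≤ M.rk' X := by
  obtain ⟨B, hB⟩ := M.exists_isBase
  refine le_csSup ⟨B.ncard, ?_⟩ ⟨I, hI, hIX, rfl⟩
  rintro _ ⟨J, hJ, -, rfl⟩
  exact hJ.ncard_le_ncard_of_isBase hB

lemma Indep.rk'_eq_ncard (hI : M.Indep I) : M.rk' I = I.ncard :=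
  le_antisymm (rk'_le_of_forall_indep fun _ _ hJI ↦ ncard_le_ncard hJI hI.finite)
    (hI.ncard_le_rk' subset_rfl)

lemma IsBase.rk'_eq_of_subset (hB : M.IsBase B) (hBX : B ⊆ X) : M.rk' X = B.ncard :=
  le_antisymm (rk'_le_of_forall_indep fun _ hI _ ↦ hI.ncard_le_ncard_of_isBase hB)
    (hB.indep.ncard_le_rk' hBX)

lemma IsCircuit.ncard_le_ncard_add_one (hC : M.IsCircuit C) (hB : M.IsBase B) :
    C.ncard ≤ B.ncard + 1 := by
  obtain ⟨e, he⟩ := hC.nonempty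
  have h := (hC.sdiff_singleton_indep he).ncard_le_ncard_of_isBase hB
  rw [ncard_sdiff_singleton_of_mem he] at h
  omega

end Finite

namespace IsSpike

variable {s t m : ℕ} {A : Fin m → Set α} {J K : Finset (Fin m)} {i j : Fin m} {x : α}

lemma left_le_order (hA : M.IsSpike s t A) : s ≤ m := le_of_max_le_left hA.1

lemma right_le_order (hA : M.IsSpike s t A) : t ≤ m := le_of_max_le_right hA.1

lemma iUnion_eq (hA : M.IsSpike s t A) : ⋃ i, A i = M.E := hA.2.1

lemma pairwise_disjoint (hA : M.IsSpike s t A) : Pairwise (Disjoint on A) := hA.2.2.1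

lemma ncard_arm (hA : M.IsSpike s t A) (i : Fin m) : (A i).ncard = 2 := hA.2.2.2.1 i

-- `IsCircuit'` and `IsCocircuit'` unfold to Mathlib's `IsCircuit` and `IsCocircuit`.
lemma isCircuit (hA : M.IsSpike s t A) {I : Finset (Fin m)} (hI : I.card = s) :
    M.IsCircuit (⋃ i ∈ I, A i) :=
  hA.2.2.2.2.1 I hI

lemma isCocircuit (hA : M.IsSpike s t A) {I : Finset (Fin m)} (hI : I.card = t) :
    M.IsCocircuit (⋃ i ∈ I, A i) :=
  hA.2.2.2.2.2 I hI

lemma dual (hA : M.IsSpike s t A) : M✶.IsSpike t s A :=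
  ⟨by rw [max_comm]; exact hA.1, hA.iUnion_eq, hA.pairwise_disjoint, hA.ncard_arm,
    fun _ hI ↦ hA.isCocircuit hI,
    fun _ hI ↦ by rw [IsCocircuit', dual_dual]; exact hA.isCircuit hI⟩

lemma finite_arm (hA : M.IsSpike s t A) (i : Fin m) : (A i).Finite :=
  finite_of_ncard_pos (by rw [hA.ncard_arm]; norm_num)

lemma nonempty_arm (hA : M.IsSpike s t A) (i : Fin m) : (A i).Nonempty :=
  nonempty_of_ncard_ne_zero (by rw [hA.ncard_arm]; norm_num)

lemma finite (hA : M.IsSpike s t A) : M.Finite :=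
  ⟨hA.iUnion_eq ▸ finite_iUnion hA.finite_arm⟩

lemma eq_of_mem_of_mem (hA : M.IsSpike s t A) (hi : x ∈ A i) (hj : x ∈ A j) : i = j :=
  hA.pairwise_disjoint.eq (not_disjoint_iff.2 ⟨x, hi, hj⟩)

lemma mem_biUnion_iff (hA : M.IsSpike s t A) (hi : x ∈ A i) :
    x ∈ ⋃ j ∈ J, A j ↔ i ∈ J := by
  refine ⟨fun hx ↦ ?_, fun hiJ ↦ mem_biUnion hiJ hi⟩
  obtain ⟨j, hj, hxj⟩ := mem_iUnion₂.1 hx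
  rwa [hA.eq_of_mem_of_mem hi hxj]

lemma biUnion_subset_ground (hA : M.IsSpike s t A) (J : Finset (Fin m)) :
    ⋃ j ∈ J, A j ⊆ M.E :=
  hA.iUnion_eq ▸ iUnion₂_subset fun j _ ↦ subset_iUnion A j

lemma ncard_biUnion (hA : M.IsSpike s t A) (J : Finset (Fin m)) :
    (⋃ j ∈ J, A j).ncard = 2 * J.card := by
  have h := J.finite_toSet.ncard_biUnion (fun i _ ↦ hA.finite_arm i)
    (hA.pairwise_disjoint.set_pairwise _)
  simp only [Finset.mem_coe, hA.ncard_arm] at h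
  rw [h, finsum_mem_finset_eq_sum, Finset.sum_const, smul_eq_mul, mul_comm]

lemma diff_biUnion (hA : M.IsSpike s t A) (J : Finset (Fin m)) :
    M.E \ ⋃ j ∈ J, A j = ⋃ j ∈ Jᶜ, A j := by
  ext x
  rw [← hA.iUnion_eq, mem_sdiff, mem_iUnion]
  constructor
  · rintro ⟨⟨i, hi⟩, hx⟩
    rw [hA.mem_biUnion_iff hi] at hx
    exact (hA.mem_biUnion_iff hi).2 (Finset.mem_compl.2 hx)
  · intro hx
    obtain ⟨i, -, hi⟩ := mem_iUnion₂.1 hx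
    rw [hA.mem_biUnion_iff hi] at hx ⊢
    exact ⟨⟨i, hi⟩, Finset.mem_compl.1 hx⟩

lemma ncard_ground (hA : M.IsSpike s t A) : M.E.ncard = 2 * m := by
  rw [← hA.iUnion_eq]
  simpa using hA.ncard_biUnion Finset.univ

lemma indep_biUnion_of_card_lt (hA : M.IsSpike s t A) (hJ : J.card < s) :
    M.Indep (⋃ j ∈ J, A j) := by
  obtain ⟨K, hJK, -, hK⟩ := Finset.exists_subsuperset_card_eq (Finset.subset_univ J) hJ.le
    (by simpa using hA.left_le_order)
  obtain ⟨i, hiK, hiJ⟩ := Finset.exists_mem_notMem_of_card_lt_card (hK ▸ hJ)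
  obtain ⟨x, hx⟩ := hA.nonempty_arm i
  refine ((hA.isCircuit hK).sdiff_singleton_indep (mem_biUnion hiK hx)).subset
    fun y hy ↦ ⟨biUnion_subset_biUnion_left hJK hy, ?_⟩
  rintro rfl
  exact hiJ ((hA.mem_biUnion_iff hx).1 hy)

lemma exists_isBase_subset_biUnion (hA : M.IsSpike s t A) (hJ : m < J.card + t) :
    ∃ B, M.IsBase B ∧ B ⊆ ⋃ j ∈ J, A j := by
  have hJm : J.card ≤ m := J.card_le_univ.trans_eq (Fintype.card_fin m)
  have hJc : Jᶜ.card < t := by rw [Finset.card_compl, Fintype.card_fin]; omega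
  have hco : M.Coindep (⋃ j ∈ Jᶜ, A j) := hA.dual.indep_biUnion_of_card_lt hJc
  rw [← hA.diff_biUnion] at hco
  obtain ⟨B, hB, hBJ⟩ := hco.exists_isBase_subset_compl
  exact ⟨B, hB, by rwa [sdiff_sdiff_cancel_left (hA.biUnion_subset_ground J)] at hBJ⟩

lemma ncard_add_one_le_of_indep (hA : M.IsSpike s t A) (hI : M.Indep I)
    (hIJ : I ⊆ ⋃ j ∈ J, A j) : I.ncard + 1 ≤ s + J.card := by
  classical
  set F := J.filter fun j ↦ A j ⊆ I
  have hF : F.card < s := by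
    by_contra! h
    obtain ⟨S, hSF, hS⟩ := Finset.exists_subset_card_eq h
    exact (hA.isCircuit hS).not_indep
      (hI.subset (iUnion₂_subset fun j hj ↦ (Finset.mem_filter.1 (hSF hj)).2))
  have harm : ∀ j ∈ J, (I ∩ A j).ncard ≤ 1 + if A j ⊆ I then 1 else 0 := by
    intro j _
    split_ifs with hj
    · exact (ncard_le_ncard inter_subset_right (hA.finite_arm j)).trans (hA.ncard_arm j).le
    · have := ncard_lt_ncard (inter_subset_right.ssubset_of_not_subset
        fun h ↦ hj (h.trans inter_subset_left)) (hA.finite_arm j)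
      rw [hA.ncard_arm] at this
      omega
  have hcount : I.ncard ≤ J.card + F.card := calc
    I.ncard = (⋃ j ∈ J, I ∩ A j).ncard := by rw [← inter_iUnion₂, inter_eq_left.2 hIJ]
    _ ≤ ∑ j ∈ J, (I ∩ A j).ncard := J.set_ncard_biUnion_le _
    _ ≤ ∑ j ∈ J, (1 + if A j ⊆ I then 1 else 0) := Finset.sum_le_sum harm
    _ = J.card + F.card := by
      rw [Finset.sum_add_distrib, Finset.card_filter, Finset.sum_const, smul_eq_mul, mul_one]
  omega

lemma inter_ne_singleton_of_isCircuit (hA : M.IsSpike s t A) (ht : 0 < t)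
    (hJ : J.card + t ≤ m + 1) (hC : M.IsCircuit C) (hCJ : C ⊆ ⋃ j ∈ J, A j) (hj : j ∈ J) :
    C ∩ A j ≠ {x} := by
  obtain ⟨T, hTJ, hT⟩ := Finset.exists_subset_card_eq (s := Jᶜ) (n := t - 1)
    (by rw [Finset.card_compl, Fintype.card_fin]; omega)
  have hjT : j ∉ T := fun h ↦ Finset.mem_compl.1 (hTJ h) hj
  have hD := hA.isCocircuit (I := insert j T) (by rw [Finset.card_insert_of_notMem hjT]; omega)
  have hCD : C ∩ ⋃ i ∈ insert j T, A i = C ∩ A j := by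
    ext y
    refine ⟨fun ⟨hyC, hyD⟩ ↦ ⟨hyC, ?_⟩,
      fun ⟨hyC, hyj⟩ ↦ ⟨hyC, mem_biUnion (Finset.mem_insert_self j T) hyj⟩⟩
    obtain ⟨i, hiJ, hyi⟩ := mem_iUnion₂.1 (hCJ hyC)
    obtain rfl | hiT := Finset.mem_insert.1 ((hA.mem_biUnion_iff hyi).1 hyD)
    · exact hyi
    · exact absurd hiJ (Finset.mem_compl.1 (hTJ hiT))
  exact hCD ▸ hC.inter_isCocircuit_ne_singleton hD

lemma exists_indep_subset_biUnion_ncard_eq (hA : M.IsSpike s t A) (ht : 0 < t) (hKJ : K ⊆ J)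
    (hK : K.card < s) (hJ : J.card + t ≤ m + 1) :
    ∃ I, M.Indep I ∧ I ⊆ ⋃ j ∈ J, A j ∧ I.ncard = K.card + J.card := by
  classical
  choose f hf using hA.nonempty_arm
  set I := (⋃ j ∈ K, A j) ∪ f '' ↑(J \ K)
  have hIJ : I ⊆ ⋃ j ∈ J, A j := union_subset (biUnion_subset_biUnion_left hKJ)
    (by rintro _ ⟨j, hj, rfl⟩; exact mem_biUnion (Finset.mem_sdiff.1 hj).1 (hf j))
  refine ⟨I, (indep_iff_forall_subset_not_isCircuit
    (hIJ.trans (hA.biUnion_subset_ground J))).2 fun C hCI hC ↦ ?_, hIJ, ?_⟩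
  · have hCK : C ⊆ ⋃ j ∈ K, A j := by
      intro x hxC
      obtain hx | ⟨j, hj, rfl⟩ := hCI hxC
      · exact hx
      obtain ⟨hjJ, hjK⟩ := Finset.mem_sdiff.1 hj
      have hCj : C ∩ A j = {f j} := by
        refine subset_antisymm (fun y hy ↦ ?_) (singleton_subset_iff.2 ⟨hxC, hf j⟩)
        obtain hy' | ⟨i, -, rfl⟩ := hCI hy.1
        · exact absurd ((hA.mem_biUnion_iff hy.2).1 hy') hjK
        · rw [hA.eq_of_mem_of_mem (hf i) hy.2]; rfl
      exact absurd hCj (hA.inter_ne_singleton_of_isCircuit ht hJ hC (hCI.trans hIJ) hjJ)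
    exact hC.not_indep ((hA.indep_biUnion_of_card_lt hK).subset hCK)
  · have hdisj : Disjoint (⋃ j ∈ K, A j) (f '' ↑(J \ K)) := disjoint_right.2 <| by
      rintro _ ⟨j, hj, rfl⟩ hx
      exact (Finset.mem_sdiff.1 hj).2 ((hA.mem_biUnion_iff (hf j)).1 hx)
    have hinj : InjOn f ↑(J \ K) := fun i _ j _ h ↦ hA.eq_of_mem_of_mem (hf i) (h ▸ hf j)
    rw [ncard_union_eq hdisj (K.finite_toSet.biUnion fun i _ ↦ hA.finite_arm i)
      ((J \ K).finite_toSet.image f), hA.ncard_biUnion, hinj.ncard_image, ncard_coe_finset,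
      Finset.card_sdiff_of_subset hKJ]
    have := Finset.card_le_card hKJ
    omega

lemma add_le_order_add_one (hA : M.IsSpike s t A) : s + t ≤ m + 1 := by
  have := hA.finite
  obtain ⟨B, hB⟩ := M.exists_isBase
  obtain ⟨S, -, hS⟩ := (Finset.univ : Finset (Fin m)).exists_subset_card_eq
    (by simpa using hA.left_le_order)
  obtain ⟨T, -, hT⟩ := (Finset.univ : Finset (Fin m)).exists_subset_card_eq
    (by simpa using hA.right_le_order)
  have hs := (hA.isCircuit hS).ncard_le_ncard_add_one hB
  have ht := (hA.isCocircuit hT).ncard_le_ncard_add_one hB.compl_isBase_dual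
  have hE := ncard_sdiff_add_ncard_of_subset hB.subset_ground M.ground_finite
  rw [hA.ncard_biUnion, hS] at hs
  rw [hA.ncard_biUnion, hT] at ht
  rw [hA.ncard_ground] at hE
  omega

lemma rk'_biUnion_of_card_lt (hA : M.IsSpike s t A) (hJ : J.card < s) :
    M.rk' (⋃ j ∈ J, A j) = 2 * J.card := by
  have := hA.finite
  rw [(hA.indep_biUnion_of_card_lt hJ).rk'_eq_ncard, hA.ncard_biUnion]

lemma rk'_biUnion_of_le_of_le (hA : M.IsSpike s t A) (hs : 0 < s) (ht : 0 < t)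
    (hsJ : s ≤ J.card) (hJt : J.card + t ≤ m + 1) :
    M.rk' (⋃ j ∈ J, A j) = s + J.card - 1 := by
  have := hA.finite
  refine le_antisymm (rk'_le_of_forall_indep fun I hI hIJ ↦ ?_) ?_
  · have := hA.ncard_add_one_le_of_indep hI hIJ
    omega
  · obtain ⟨K, hKJ, hK⟩ := Finset.exists_subset_card_eq (show s - 1 ≤ J.card by omega)
    obtain ⟨I, hI, hIJ, hIcard⟩ := hA.exists_indep_subset_biUnion_ncard_eq ht hKJ (by omega) hJt
    calc s + J.card - 1 = I.ncard := by omega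
      _ ≤ _ := hI.ncard_le_rk' hIJ

lemma rk'_biUnion_of_lt (hA : M.IsSpike s t A) (hJ : m < J.card + t) :
    M.rk' (⋃ j ∈ J, A j) = M.rk' M.E := by
  have := hA.finite
  obtain ⟨B, hB, hBJ⟩ := hA.exists_isBase_subset_biUnion hJ
  rw [hB.rk'_eq_of_subset hBJ, hB.rk'_eq_of_subset hB.subset_ground]

end IsSpike

end Matroid

universe u

open Matroid

/-- For an `(s,t)`-spike with associated partition `(A 1, …, A m)` and
`J ⊆ [m]`, the rank of `A_J = ⋃_{j ∈ J} A j` is `2|J|` if `|J| < s`, is `s + |J| − 1` if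
`s ≤ |J| ≤ m − t + 1`, and is `m + s − t` if `|J| ≥ m − t + 1`. -/
theorem statement15 {α : Type u} (s t m : ℕ) (hs : 0 < s) (ht : 0 < t)
    (M : Matroid α) (A : Fin m → Set α) (hA : M.IsSpike s t A)
    (J : Finset (Fin m)) :
    (J.card < s → M.rk' (⋃ j ∈ J, A j) = 2 * J.card) ∧
    (s ≤ J.card → J.card ≤ m - t + 1 → M.rk' (⋃ j ∈ J, A j) = s + J.card - 1) ∧
    (m - t + 1 ≤ J.card → M.rk' (⋃ j ∈ J, A j) = m + s - t) := by
  have hst := hA.add_le_order_add_one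
  have htm := hA.right_le_order
  obtain ⟨J₀, -, hJ₀⟩ := (Finset.univ : Finset (Fin m)).exists_subset_card_eq
    (n := m - t + 1) (by rw [Finset.card_univ, Fintype.card_fin]; omega)
  refine ⟨hA.rk'_biUnion_of_card_lt,
    fun hsJ hJt ↦ hA.rk'_biUnion_of_le_of_le hs ht hsJ (by omega), fun hJ ↦ ?_⟩
  rw [hA.rk'_biUnion_of_lt (by omega), ← hA.rk'_biUnion_of_lt (J := J₀) (by omega),
    hA.rk'_biUnion_of_le_of_le hs ht (by omega) (by omega), hJ₀]
  omega
end
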